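/- The twist J = Σ_{k=0}^{n-1} e_k ⊗ x^k for B = K[Z_n] satisfies Δ_{B⊗B}(J) = (e₁ ⊗ e₂)(J) · (e₂ ⊗ e₁)(J) · (J ⊗ J) in (B⊗B) ⊗ (B⊗B), where e₁, e₂ : B → B⊗B are the embeddings b ↦ b⊗1 and b ↦ 1⊗b; explicitly, Σ_{k,j} e_k ⊗ x^j ⊗ e_{j-k} ⊗ x^j = Σ_{k,l} e_k ⊗ x^{k+l} ⊗ e_l ⊗ x^{k+l}. -/

import Mathlib

set_option linter.unusedSectionVars false

open MonoidAlgebra Finset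
open scoped TensorProduct

noncomputable section

variable (K : Type*) [CommRing K] (G : Type*) [CommGroup G]

namespace GroupBialgebra

instance instCoalgebra : Coalgebra K (MonoidAlgebra K G) :=
  inferInstanceAs (Coalgebra K (MonoidAlgebra K G))

variable {K G}

lemma comul_single (g : G) (c : K) :
    Coalgebra.comul (R := K) (MonoidAlgebra.single g c) =
      MonoidAlgebra.single g (1 : K) ⊗ₜ[K] MonoidAlgebra.single g c := by
  exact (MonoidAlgebra.comul_single (R := K) (A := K) g c).trans
    (by simp [CommSemiring.comul_apply])

lemma counit_single (g : G) (c : K) :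
    Coalgebra.counit (R := K) (MonoidAlgebra.single g c) = c := by
  exact (MonoidAlgebra.counit_single (R := K) (A := K) g c).trans
    (by simp [CommSemiring.counit_apply])

variable (K G)

instance instBialgebra : Bialgebra K (MonoidAlgebra K G) :=
  Bialgebra.mk' K (MonoidAlgebra K G)
    (by simpa [MonoidAlgebra.one_def] using counit_single (1 : G) (1 : K))
    (fun {a b} => by
      induction a using MonoidAlgebra.induction_linear with
      | zero => simp
      | add f h hf hh => simp [add_mul, hf, hh]
      | single g c =>
        induction b using MonoidAlgebra.induction_linear with
        | zero => simp
        | add f h hf hh => simp [mul_add, hf, hh]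
        | single h d =>
          simp only [MonoidAlgebra.single_mul_single, counit_single])
    (by rw [MonoidAlgebra.one_def, comul_single, Algebra.TensorProduct.one_def, MonoidAlgebra.one_def])
    (fun {a b} => by
      induction a using MonoidAlgebra.induction_linear with
      | zero => simp
      | add f h hf hh => simp [add_mul, hf, hh]
      | single g c =>
        induction b using MonoidAlgebra.induction_linear with
        | zero => simp
        | add f h hf hh => simp [mul_add, hf, hh]
        | single h d =>
          simp only [MonoidAlgebra.single_mul_single, comul_single,
            Algebra.TensorProduct.tmul_mul_tmul, one_mul])

end GroupBialgebra

end

noncomputable section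

/-- The group algebra `K[Z_n]` of the cyclic group of order `n`. -/
abbrev GroupAlgZn (K : Type*) [CommRing K] (n : ℕ) : Type _ :=
  MonoidAlgebra K (Multiplicative (ZMod n))

/-- The canonical generator `x` of the group algebra `K[Z_n]`. -/
def xgen (K : Type*) [CommRing K] (n : ℕ) : GroupAlgZn K n :=
  MonoidAlgebra.of K (Multiplicative (ZMod n)) (Multiplicative.ofAdd (1 : ZMod n))

/-- The idempotent `e_k = (1/n) ∑_{i=0}^{n-1} q^{-ik} x^i` in `K[Z_n]`. -/
def eIdem (K : Type*) [Field K] (n : ℕ) (q : K) (k : ZMod n) : GroupAlgZn K n :=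
  (n : K)⁻¹ • ∑ i ∈ Finset.range n, (q ^ (i * k.val))⁻¹ • (xgen K n) ^ i

/-! Write `ψ a = q ^ a` for the character of `ℤ/n` and `x^a` for the group elements. Then
`e_k = (1/n) ∑_a ψ(-ak) x^a`, and character orthogonality gives `e_k e_l = δ_kl e_l`,
`x^a e_l = ψ(al) e_l`, `x^m = ∑_l ψ(lm) e_l` and `Δ e_k = ∑_m e_m ⊗ e_{k-m}`. The last identity
yields `Δ J = ∑_{k,j} e_k ⊗ x^j ⊗ e_{j-k} ⊗ x^j`. On the other side, left multiplication by
`(e₂ ⊗ e₁)(J)` sends the summand `e_a ⊗ x^a ⊗ e_b ⊗ x^b` of `J ⊗ J` to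
`e_a ⊗ (∑_l ψ(l(a+b)) e_l) ⊗ e_b ⊗ x^b = e_a ⊗ x^{a+b} ⊗ e_b ⊗ x^b`, and then `(e₁ ⊗ e₂)(J)`
multiplies the last factor by `x^a`. The substitution `j = k + l` matches the two sums. -/

namespace CharacterTwist

open AddChar

lemma sum_sum_sub_eq_sum_sum_add {A M : Type*} [AddCommGroup A] [Fintype A] [AddCommMonoid M]
    (f : A → A → A → M) : ∑ k, ∑ j, f k (j - k) j = ∑ k, ∑ l, f k l (k + l) :=
  Finset.sum_congr rfl fun k _ => (Fintype.sum_equiv (Equiv.addLeft k) _ _ fun l => by simp).symm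

section

variable {K : Type*} [Field K] {R : Type*} [CommRing R]

local notation "B" => MonoidAlgebra K (Multiplicative R)

variable (K) in
def xpow (a : R) : B := single (Multiplicative.ofAdd a) 1

lemma xpow_mul_xpow (a b : R) : xpow K a * xpow K b = xpow K (a + b) := by
  simp [xpow, single_mul_single]

lemma comul_xpow (a : R) : Coalgebra.comul (R := K) (xpow K a) = xpow K a ⊗ₜ xpow K a :=
  GroupBialgebra.comul_single _ _

variable [Fintype R] (ψ : AddChar R K)

def idempotent (k : R) : B :=
  (Fintype.card R : K)⁻¹ • ∑ a, ψ (-(a * k)) • xpow K a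

lemma xpow_mul_idempotent (a l : R) :
    xpow K a * idempotent ψ l = ψ (a * l) • idempotent ψ l := by
  simp only [idempotent, Finset.mul_sum, Finset.smul_sum, mul_smul_comm, xpow_mul_xpow, smul_smul]
  refine Fintype.sum_equiv (Equiv.addLeft a) _ _ fun b => ?_
  rw [Equiv.coe_addLeft, mul_left_comm, ← map_add_eq_mul]
  ring_nf

def twist : B ⊗[K] B := ∑ k, idempotent ψ k ⊗ₜ xpow K k

variable [DecidableEq R] {ψ} (hψ : ψ.IsPrimitive) [NeZero (Fintype.card R : K)]
include hψ

lemma inv_card_mul_sum_mulShift (b : R) :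
    (Fintype.card R : K)⁻¹ * ∑ a, ψ (a * b) = if b = 0 then 1 else 0 := by
  rw [sum_mulShift b hψ]
  split_ifs
  exacts [inv_mul_cancel₀ (NeZero.ne _), by simp]

lemma sum_smul_idempotent (m : R) : ∑ l, ψ (l * m) • idempotent ψ l = xpow K m := by
  have hcoef : ∀ a l : R, ψ (l * m) * ((Fintype.card R : K)⁻¹ * ψ (-(a * l)))
      = (Fintype.card R : K)⁻¹ * ψ (l * (m - a)) := fun a l => by
    rw [mul_left_comm, ← map_add_eq_mul]; ring_nf
  simp only [idempotent, Finset.smul_sum, smul_smul, hcoef]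
  rw [Finset.sum_comm]
  simp only [← Finset.sum_smul, ← Finset.mul_sum, inv_card_mul_sum_mulShift hψ, sub_eq_zero,
    ite_smul, one_smul, zero_smul, Finset.sum_ite_eq, Finset.mem_univ, if_true]

lemma idempotent_mul_idempotent (k l : R) :
    idempotent ψ k * idempotent ψ l = if k = l then idempotent ψ l else 0 := by
  have hcoef : ∀ a, ψ (-(a * k)) * ψ (a * l) = ψ (a * (l - k)) := fun a => by
    rw [← map_add_eq_mul]; ring_nf
  nth_rw 1 [idempotent]
  rw [smul_mul_assoc, Finset.sum_mul]
  simp only [smul_mul_assoc, xpow_mul_idempotent, smul_smul, hcoef, ← Finset.sum_smul,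
    inv_card_mul_sum_mulShift hψ, sub_eq_zero, ite_smul, one_smul, zero_smul, eq_comm]

lemma comul_idempotent (k : R) :
    Coalgebra.comul (R := K) (idempotent ψ k) = ∑ m, idempotent ψ m ⊗ₜ idempotent ψ (k - m) := by
  have hxx : ∀ a : R, xpow K a ⊗ₜ[K] xpow K a
      = ∑ m, ∑ l, (ψ (m * a) * ψ (l * a)) • (idempotent ψ m ⊗ₜ idempotent ψ l) := fun a => by
    simp only [← sum_smul_idempotent hψ a, TensorProduct.sum_tmul, TensorProduct.tmul_sum,
      TensorProduct.smul_tmul_smul]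
    exact Finset.sum_comm
  have hcoef : ∀ a m l : R, ψ (-(a * k)) * (ψ (m * a) * ψ (l * a)) = ψ (a * (m + l - k)) :=
    fun a m l => by rw [← map_add_eq_mul, ← map_add_eq_mul]; ring_nf
  calc Coalgebra.comul (R := K) (idempotent ψ k)
      = ∑ m, ∑ l, ((Fintype.card R : K)⁻¹ * ∑ a, ψ (a * (m + l - k))) •
          (idempotent ψ m ⊗ₜ idempotent ψ l) := by
        rw [idempotent, map_smul, map_sum]
        simp only [map_smul, comul_xpow, hxx, Finset.smul_sum, smul_smul, hcoef]
        simp only [Finset.mul_sum, Finset.sum_smul]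
        rw [Finset.sum_comm]
        exact Finset.sum_congr rfl fun _ _ => Finset.sum_comm
    _ = ∑ m, idempotent ψ m ⊗ₜ idempotent ψ (k - m) := by
        simp only [inv_card_mul_sum_mulShift hψ, ite_smul, one_smul, zero_smul, sub_eq_zero,
          ← eq_sub_iff_add_eq', Finset.sum_ite_eq', Finset.mem_univ, if_true]

lemma comul_twist : Coalgebra.comul (R := K) (twist ψ)
    = ∑ k, ∑ j, (idempotent ψ k ⊗ₜ xpow K j) ⊗ₜ (idempotent ψ (j - k) ⊗ₜ xpow K j) := by
  rw [twist, map_sum, Finset.sum_comm]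
  refine Finset.sum_congr rfl fun j _ => ?_
  simp only [TensorProduct.comul_tmul, comul_idempotent hψ, comul_xpow, TensorProduct.sum_tmul,
    map_sum, TensorProduct.AlgebraTensorModule.tensorTensorTensorComm_tmul]

lemma map_includeRight_includeLeft_twist_mul (a b : R) :
    TensorProduct.map (Algebra.TensorProduct.includeRight : B →ₐ[K] B ⊗[K] B).toLinearMap
        (Algebra.TensorProduct.includeLeft : B →ₐ[K] B ⊗[K] B).toLinearMap (twist ψ) *
      ((idempotent ψ a ⊗ₜ xpow K a) ⊗ₜ (idempotent ψ b ⊗ₜ xpow K b))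
    = (idempotent ψ a ⊗ₜ xpow K (a + b)) ⊗ₜ (idempotent ψ b ⊗ₜ xpow K b) := by
  simp only [twist, map_sum, TensorProduct.map_tmul, AlgHom.toLinearMap_apply,
    Algebra.TensorProduct.includeLeft_apply, Algebra.TensorProduct.includeRight_apply,
    Finset.sum_mul, Algebra.TensorProduct.tmul_mul_tmul, one_mul]
  have hterm : ∀ l, (idempotent ψ a ⊗ₜ[K] (idempotent ψ l * xpow K a)) ⊗ₜ[K]
        ((xpow K l * idempotent ψ b) ⊗ₜ[K] xpow K b)
      = (idempotent ψ a ⊗ₜ (ψ (l * (a + b)) • idempotent ψ l)) ⊗ₜ (idempotent ψ b ⊗ₜ xpow K b) :=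
    fun l => by
      simp only [mul_comm _ (xpow K a), xpow_mul_idempotent, TensorProduct.tmul_smul,
        ← TensorProduct.smul_tmul', smul_smul, mul_add, map_add_eq_mul, mul_comm a l]
      rw [mul_comm]
  simp only [hterm, ← TensorProduct.sum_tmul, ← TensorProduct.tmul_sum, sum_smul_idempotent hψ]

lemma map_includeLeft_includeRight_twist_mul (a b : R) (y z : B) :
    TensorProduct.map (Algebra.TensorProduct.includeLeft : B →ₐ[K] B ⊗[K] B).toLinearMap
        (Algebra.TensorProduct.includeRight : B →ₐ[K] B ⊗[K] B).toLinearMap (twist ψ) *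
      ((idempotent ψ a ⊗ₜ y) ⊗ₜ (z ⊗ₜ xpow K b))
    = (idempotent ψ a ⊗ₜ y) ⊗ₜ (z ⊗ₜ xpow K (a + b)) := by
  simp only [twist, map_sum, TensorProduct.map_tmul, AlgHom.toLinearMap_apply,
    Algebra.TensorProduct.includeLeft_apply, Algebra.TensorProduct.includeRight_apply,
    Finset.sum_mul, Algebra.TensorProduct.tmul_mul_tmul, one_mul,
    idempotent_mul_idempotent hψ, xpow_mul_xpow, TensorProduct.ite_tmul, Finset.sum_ite_eq',
    Finset.mem_univ, if_true]

theorem comul_twist_eq_mul :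
    Coalgebra.comul (R := K) (twist ψ) =
      TensorProduct.map (Algebra.TensorProduct.includeLeft : B →ₐ[K] B ⊗[K] B).toLinearMap
          (Algebra.TensorProduct.includeRight : B →ₐ[K] B ⊗[K] B).toLinearMap (twist ψ) *
        TensorProduct.map (Algebra.TensorProduct.includeRight : B →ₐ[K] B ⊗[K] B).toLinearMap
          (Algebra.TensorProduct.includeLeft : B →ₐ[K] B ⊗[K] B).toLinearMap (twist ψ) *
        (twist ψ ⊗ₜ twist ψ) := by
  have hJJ : twist ψ ⊗ₜ[K] twist ψ
      = ∑ a, ∑ b, (idempotent ψ a ⊗ₜ xpow K a) ⊗ₜ (idempotent ψ b ⊗ₜ xpow K b) := by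
    rw [twist, TensorProduct.sum_tmul]
    simp only [TensorProduct.tmul_sum]
  rw [comul_twist hψ, hJJ, sum_sum_sub_eq_sum_sum_add
    (fun k l j => (idempotent ψ k ⊗ₜ[K] xpow K j) ⊗ₜ[K] (idempotent ψ l ⊗ₜ[K] xpow K j))]
  simp only [Finset.mul_sum, mul_assoc, map_includeRight_includeLeft_twist_mul hψ,
    map_includeLeft_includeRight_twist_mul hψ]

end

section

variable {K : Type*} [Field K] {n : ℕ} [NeZero n]

lemma sum_range_eq_sum_val {M : Type*} [AddCommMonoid M] (g : ℕ → M) :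
    ∑ i ∈ Finset.range n, g i = ∑ a : ZMod n, g a.val :=
  (Finset.sum_nbij' ZMod.val (↑) (by simp [ZMod.val_lt]) (by simp) (by simp)
    (fun _ hi => ZMod.val_cast_of_lt (by simpa using hi)) (by simp)).symm

variable (K) in
lemma xgen_pow (i : ℕ) : xgen K n ^ i = xpow K (i : ZMod n) := by
  simp [xgen, xpow, ← ofAdd_nsmul]

lemma eIdem_eq_idempotent {q : K} (hq : q ^ n = 1) (k : ZMod n) :
    eIdem K n q k = idempotent (AddChar.zmodChar n hq) k := by
  rw [eIdem, idempotent, ZMod.card, sum_range_eq_sum_val]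
  congr 1
  refine Finset.sum_congr rfl fun a _ => ?_
  rw [xgen_pow, AddChar.map_neg_eq_inv, ← AddChar.zmodChar_apply' hq, Nat.cast_mul]
  simp only [ZMod.natCast_zmod_val]

end

end CharacterTwist

theorem comul_J_eq_general (K : Type*) [Field K] (n : ℕ)
    (q : K) (hq : IsPrimitiveRoot q n) :
    let B := GroupAlgZn K n
    let x := xgen K n
    let e : ℕ → B := fun k => eIdem K n q ((k : ℕ) : ZMod n)
    let J : B ⊗[K] B := ∑ k ∈ Finset.range n, (e k) ⊗ₜ[K] (x ^ k)
    (Coalgebra.comul (R := K) (A := B ⊗[K] B) J =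
      (TensorProduct.map (Algebra.TensorProduct.includeLeft : B →ₐ[K] B ⊗[K] B).toLinearMap
        (Algebra.TensorProduct.includeRight : B →ₐ[K] B ⊗[K] B).toLinearMap) J *
      (TensorProduct.map (Algebra.TensorProduct.includeRight : B →ₐ[K] B ⊗[K] B).toLinearMap
        (Algebra.TensorProduct.includeLeft : B →ₐ[K] B ⊗[K] B).toLinearMap) J *
      (J ⊗ₜ[K] J)) ∧
    (∑ k ∈ Finset.range n, ∑ j ∈ Finset.range n,
        ((e k) ⊗ₜ[K] (x ^ j)) ⊗ₜ[K]
          ((eIdem K n q (((j : ℕ) : ZMod n) - ((k : ℕ) : ZMod n))) ⊗ₜ[K] (x ^ j)) =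
      ∑ k ∈ Finset.range n, ∑ l ∈ Finset.range n,
        ((e k) ⊗ₜ[K] (x ^ (k + l))) ⊗ₜ[K] ((e l) ⊗ₜ[K] (x ^ (k + l)))) := by
  intro B x e J
  rcases n.eq_zero_or_pos with rfl | hn
  · simp [J]
  have : NeZero n := ⟨hn.ne'⟩
  have : NeZero (Fintype.card (ZMod n) : K) := by
    rw [ZMod.card]; exact hq.neZero'
  have hψ := AddChar.zmodChar_primitive_of_primitive_root n hq
  simp only [J, e, x, CharacterTwist.sum_range_eq_sum_val, CharacterTwist.xgen_pow,
    ZMod.natCast_zmod_val, Nat.cast_add, CharacterTwist.eIdem_eq_idempotent hq.pow_eq_one]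
  exact ⟨CharacterTwist.comul_twist_eq_mul hψ, CharacterTwist.sum_sum_sub_eq_sum_sum_add
    (fun k l j => (CharacterTwist.idempotent _ k ⊗ₜ[K] CharacterTwist.xpow K j) ⊗ₜ[K]
      (CharacterTwist.idempotent _ l ⊗ₜ[K] CharacterTwist.xpow K j))⟩

/-- the twist `J = ∑_k e_k ⊗ x^k` satisfies
`Δ_{B⊗B}(J) = (e₁ ⊗ e₂)(J) · (e₂ ⊗ e₁)(J) · (J ⊗ J)`; explicitly,
`∑_{k,j} e_k ⊗ x^j ⊗ e_{j−k} ⊗ x^j = ∑_{k,l} e_k ⊗ x^{k+l} ⊗ e_l ⊗ x^{k+l}`. -/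
theorem comul_J_eq (K : Type*) [Field K] [CharZero K] (n : ℕ) (hn : 2 ≤ n)
    (q : K) (hq : IsPrimitiveRoot q n) :
    let B := GroupAlgZn K n
    let x := xgen K n
    let e : ℕ → B := fun k => eIdem K n q ((k : ℕ) : ZMod n)
    let J : B ⊗[K] B := ∑ k ∈ Finset.range n, (e k) ⊗ₜ[K] (x ^ k)
    (Coalgebra.comul (R := K) (A := B ⊗[K] B) J =
      (TensorProduct.map (Algebra.TensorProduct.includeLeft : B →ₐ[K] B ⊗[K] B).toLinearMap
        (Algebra.TensorProduct.includeRight : B →ₐ[K] B ⊗[K] B).toLinearMap) J *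
      (TensorProduct.map (Algebra.TensorProduct.includeRight : B →ₐ[K] B ⊗[K] B).toLinearMap
        (Algebra.TensorProduct.includeLeft : B →ₐ[K] B ⊗[K] B).toLinearMap) J *
      (J ⊗ₜ[K] J)) ∧
    (∑ k ∈ Finset.range n, ∑ j ∈ Finset.range n,
        ((e k) ⊗ₜ[K] (x ^ j)) ⊗ₜ[K]
          ((eIdem K n q (((j : ℕ) : ZMod n) - ((k : ℕ) : ZMod n))) ⊗ₜ[K] (x ^ j)) =
      ∑ k ∈ Finset.range n, ∑ l ∈ Finset.range n,
        ((e k) ⊗ₜ[K] (x ^ (k + l))) ⊗ₜ[K] ((e l) ⊗ₜ[K] (x ^ (k + l)))) :=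
  comul_J_eq_general K n q hq
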